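/- Let d ≥ 2, let (X_1, …, X_d) be a Latin hypercube sample of N = d points in [0,1)^d, let ε ∈ (0, 1/d), and set D = [0, (d−1)/d + ε)^d \ [0, (d−1)/d)^d. Then P(X_1 ∈ D, X_2 ∈ D, …, X_d ∈ D) = d! · ε^d. -/

import Mathlib

open MeasureTheory ProbabilityTheory Filter
open scoped ENNReal Classical

namespace LHSPaper

/-- The anchored box `[0,a) = ∏_i [0, a_i)` in `[0,1)^d`. -/
def anchoredBox {d : ℕ} (a : Fin d → ℝ) : Set (Fin d → ℝ) := {x | ∀ i, x i ∈ Set.Ico 0 (a i)}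

/-- `C^d_0`, the collection of anchored boxes `[0,a)` with `a ∈ [0,1]^d`. -/
def anchoredBoxes (d : ℕ) : Set (Set (Fin d → ℝ)) :=
  {S | ∃ a : Fin d → ℝ, (∀ i, a i ∈ Set.Icc (0 : ℝ) 1) ∧ S = anchoredBox a}

/-- `D^d_0`, the collection of differences `B \ A` of anchored boxes. -/
def boxDiffs (d : ℕ) : Set (Set (Fin d → ℝ)) :=
  {S | ∃ A ∈ anchoredBoxes d, ∃ B ∈ anchoredBoxes d, S = B \ A}

/-- The half-open unit cube `[0,1)^d`. -/
def unitCube (d : ℕ) : Set (Fin d → ℝ) := {x | ∀ i, x i ∈ Set.Ico (0 : ℝ) 1}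

/-- `γ`-negative dependence of the indicators of the events `A 1, …, A N`. -/
def GammaNegDep {Ω : Type*} [MeasurableSpace Ω] (μ : Measure Ω) {N : ℕ}
    (γ : ℝ≥0∞) (A : Fin N → Set Ω) : Prop :=
  ∀ J : Finset (Fin N), J.Nonempty →
    μ (⋂ j ∈ J, A j) ≤ γ * ∏ j ∈ J, μ (A j) ∧
    μ (⋂ j ∈ J, (A j)ᶜ) ≤ γ * ∏ j ∈ J, μ (A j)ᶜ

/-- The `𝒮`-correlation number of a random point tuple `X`. -/
noncomputable def corrNum {Ω : Type*} [MeasurableSpace Ω] (μ : Measure Ω) {N d : ℕ}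
    (𝒮 : Set (Set (Fin d → ℝ))) (X : Fin N → Ω → Fin d → ℝ) : ℝ≥0∞ :=
  ⨆ (S : Set (Fin d → ℝ)) (_ : S ∈ 𝒮) (J : Finset (Fin N)) (_ : J.Nonempty),
    max (μ (⋂ j ∈ J, {ω | X j ω ∈ S}) / ∏ j ∈ J, μ {ω | X j ω ∈ S})
        (μ (⋂ j ∈ J, {ω | X j ω ∉ S}) / ∏ j ∈ J, μ {ω | X j ω ∉ S})

instance (N : ℕ) : MeasurableSpace (Equiv.Perm (Fin N)) := ⊤

instance (N : ℕ) : Nonempty (Equiv.Perm (Fin N)) := ⟨Equiv.refl _⟩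

/-- Value types of the sources of randomness of a Latin hypercube sample:
`d` random permutations and `N·d` random reals. -/
def lhsβ (d N : ℕ) : (Fin d ⊕ (Fin N × Fin d)) → Type :=
  fun i => Sum.elim (fun _ => Equiv.Perm (Fin N)) (fun _ => ℝ) i

noncomputable def lhsMS (d N : ℕ) : (i : Fin d ⊕ (Fin N × Fin d)) → MeasurableSpace (lhsβ d N i) :=
  fun i => match i with
  | .inl _ => ⊤
  | .inr _ => inferInstanceAs (MeasurableSpace ℝ)

def lhsFun {Ω : Type*} {d N : ℕ} (π : Fin d → Ω → Equiv.Perm (Fin N))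
    (U : Fin N → Ω → Fin d → ℝ) : (i : Fin d ⊕ (Fin N × Fin d)) → Ω → lhsβ d N i :=
  fun i => match i with
  | .inl j => π j
  | .inr p => fun ω => U p.1 ω p.2

/-- `X` is a Latin hypercube sample of `N` points in `[0,1)^d`, built from the
uniformly distributed random permutations `π_j` and the uniformly distributed
random variables `U_{n,j}`, all mutually independent. -/
def IsLHS {Ω : Type*} [MeasurableSpace Ω] (μ : Measure Ω) (d N : ℕ)
    (X : Fin N → Ω → Fin d → ℝ)
    (π : Fin d → Ω → Equiv.Perm (Fin N)) (U : Fin N → Ω → Fin d → ℝ) : Prop :=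
  (∀ j, Measure.map (π j) μ = (PMF.uniformOfFintype (Equiv.Perm (Fin N))).toMeasure) ∧
  (∀ n j, Measure.map (fun ω => U n ω j) μ = volume.restrict (Set.Ico (0 : ℝ) 1)) ∧
  @iIndepFun _ _ _ _ (lhsMS d N) (lhsFun π U) μ ∧
  (∀ n j ω, X n ω j = (((π j ω) n : ℕ) + U n ω j) / N)

/-- An elementary interval in base `b` of order `k` in `[0,1)^d`. -/
def IsElemInterval (b d k : ℕ) (E : Set (Fin d → ℝ)) : Prop :=
  ∃ ℓ : Fin d → ℕ, ∃ a : Fin d → ℕ, (∀ i, a i < b ^ ℓ i) ∧ (∑ i, ℓ i = k) ∧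
    E = {x | ∀ i, x i ∈ Set.Ico ((a i : ℝ) / b ^ ℓ i) (((a i : ℝ) + 1) / b ^ ℓ i)}

/-- A `(t,m,d)`-net in base `b`: `b^m` points in `[0,1)^d` such that every elementary
interval of order `m - t` contains exactly `b^t` points (with multiplicity). -/
def IsNet (b d m t : ℕ) (P : Fin (b ^ m) → Fin d → ℝ) : Prop :=
  (∀ n, P n ∈ unitCube d) ∧
  ∀ E : Set (Fin d → ℝ), IsElemInterval b d (m - t) E →
    (Finset.univ.filter fun n => P n ∈ E).card = b ^ t

/-- A `b`-ary scrambling of depth `ℓ`: a self-map of `[0,1)` mapping, for each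
`k ∈ {1,…,ℓ}`, elementary intervals of order `k` into elementary intervals of order `k`,
distinct ones into distinct ones. -/
def IsScrambling (b ℓ : ℕ) (σ : ℝ → ℝ) : Prop :=
  (∀ x ∈ Set.Ico (0 : ℝ) 1, σ x ∈ Set.Ico (0 : ℝ) 1) ∧
  ∀ k, 1 ≤ k → k ≤ ℓ → ∃ f : ℕ → ℕ,
    (∀ a < b ^ k, f a < b ^ k) ∧
    (∀ a < b ^ k, ∀ a' < b ^ k, a ≠ a' → f a ≠ f a') ∧
    (∀ a < b ^ k, ∀ x ∈ Set.Ico ((a : ℝ) / b ^ k) (((a : ℝ) + 1) / b ^ k),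
      σ x ∈ Set.Ico ((f a : ℝ) / b ^ k) (((f a : ℝ) + 1) / b ^ k))

/-- A basic cube of an abstract scrambled `(t,m,d)`-net in base `b`. -/
def IsBasicCube (b d m t : ℕ) (C : Set (Fin d → ℝ)) : Prop :=
  ∃ k : Fin d → ℕ, (∀ j, k j < b ^ (m - t)) ∧
    C = {x | ∀ j, x j ∈ Set.Ico ((k j : ℝ) / b ^ (m - t)) (((k j : ℝ) + 1) / b ^ (m - t))}

/-- An abstract scrambled `(t,m,d)`-net in base `b`. -/
def IsAbstractScrambledNet {Ω : Type*} [MeasurableSpace Ω] (μ : Measure Ω)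
    (b d m t : ℕ) (Y : Fin (b ^ m) → Ω → (Fin d → ℝ)) : Prop :=
  (∀ᵐ ω ∂μ, IsNet b d m t fun n => Y n ω) ∧
  (∀ i C, IsBasicCube b d m t C → μ {ω | Y i ω ∈ C} = ((b : ℝ≥0∞) ^ (d * (m - t)))⁻¹) ∧
  (∀ M : Set (Fin d → ℝ), MeasurableSet M →
    ∀ J : Finset (Fin (b ^ m)), J.Nonempty →
    ∀ C : Fin (b ^ m) → Set (Fin d → ℝ), (∀ j ∈ J, IsBasicCube b d m t (C j)) →
      μ (⋂ j ∈ J, {ω | Y j ω ∈ C j}) ≠ 0 →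
      (μ[|⋂ j ∈ J, {ω | Y j ω ∈ C j}]) (⋂ j ∈ J, {ω | Y j ω ∈ M}) =
        ∏ j ∈ J, volume (M ∩ C j) / volume (C j))

/-!
Because `U_{n,j} ∈ [0,1)`, the `j`-th coordinate of `X_n` is at least `(d-1)/d` exactly when
`π_j(n) = d-1`, and it is then below `(d-1)/d + ε` exactly when `U_{n,j} < dε`. Hence all `d`
points lie in `D` iff every point has a coordinate in the top stratum, i.e. `j ↦ π_j⁻¹(d-1)` is
onto and so a permutation `σ`, and `U_{σ j, j} < dε` for every `j`. These events are disjoint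
for distinct `σ` and, by independence, each has probability `(1/d)^d (dε)^d = ε^d`.
-/

open Equiv

lemma card_perm_apply_eq_mul_card {α : Type*} [Fintype α] [DecidableEq α] (x y : α) :
    Fintype.card {p : Perm α | p x = y} * Fintype.card α = Fintype.card (Perm α) := by
  have hfiber (z : α) :
      Fintype.card {p : Perm α | p x = z} = Fintype.card {p : Perm α | p x = y} :=
    Fintype.card_congr <| (Equiv.mulLeft (swap z y)).subtypeEquiv fun p => by
      simp [swap_apply_eq_iff]
  calc Fintype.card {p : Perm α | p x = y} * Fintype.card α
      = ∑ z : α, Fintype.card {p : Perm α | p x = z} := by simp [hfiber, mul_comm]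
    _ = Fintype.card (Perm α) := by
        rw [← Fintype.card_sigma]
        exact Fintype.card_congr (Equiv.sigmaFiberEquiv fun p : Perm α => p x)

lemma uniformOfFintype_perm_apply_eq {α : Type*} [Fintype α] [DecidableEq α]
    [MeasurableSpace (Perm α)] [MeasurableSingletonClass (Perm α)] (x y : α) :
    (PMF.uniformOfFintype (Perm α)).toMeasure {p | p x = y} = (Fintype.card α : ℝ≥0∞)⁻¹ := by
  have hfiber : Fintype.card {p : Perm α | p x = y} ≠ 0 :=
    (Fintype.card_pos_iff.2 ⟨⟨swap x y, swap_apply_left x y⟩⟩).ne'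
  rw [PMF.toMeasure_uniformOfFintype_apply _ (Set.toFinite _).measurableSet,
    ← card_perm_apply_eq_mul_card x y, Nat.cast_mul, ENNReal.div_eq_inv_mul,
    ENNReal.mul_inv (by simp) (by simp), mul_right_comm,
    ENNReal.inv_mul_cancel (by simpa using hfiber) (by simp), one_mul]

lemma exists_perm_forall_apply_eq_iff {α : Type*} [Finite α] (p : α → Perm α) (a : α)
    (P : α → α → Prop) :
    (∃ σ : Perm α, ∀ j, p j (σ j) = a ∧ P (σ j) j) ↔
      ∀ n, (∀ j, p j n = a → P n j) ∧ ∃ j, p j n = a := by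
  constructor
  · rintro ⟨σ, hσ⟩ n
    refine ⟨fun j hj => ?_, σ.symm n, by simpa using (hσ (σ.symm n)).1⟩
    obtain rfl : n = σ j := (p j).injective (hj.trans (hσ j).1.symm)
    exact (hσ j).2
  · intro h
    have hsurj : Function.Surjective fun j => (p j).symm a := fun n => by
      obtain ⟨j, hj⟩ := (h n).2
      exact ⟨j, (p j).symm_apply_eq.2 hj.symm⟩
    refine ⟨Equiv.ofBijective _ hsurj.bijective_of_finite, fun j => ?_⟩
    have hj : p j ((p j).symm a) = a := (p j).apply_symm_apply a
    exact ⟨hj, (h _).1 j hj⟩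

lemma natCast_add_div_lt_pred_div_iff {N k : ℕ} (hk : k < N) {u : ℝ} (hu : u ∈ Set.Ico 0 1) :
    ((k : ℝ) + u) / N < ((N : ℝ) - 1) / N ↔ k + 1 < N := by
  have hN : (0 : ℝ) < N := by exact_mod_cast hk.trans_le' (Nat.zero_le k)
  rw [div_lt_div_iff_of_pos_right hN]
  rcases Nat.lt_or_ge (k + 1) N with hlt | hge
  · have : (k : ℝ) + 1 + 1 ≤ N := by exact_mod_cast hlt
    simp only [hlt, iff_true]; linarith [hu.2]
  · have : (k : ℝ) + 1 = N := by exact_mod_cast le_antisymm hk hge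
    simp only [hge.not_gt, iff_false, not_lt]; linarith [hu.1]

lemma natCast_add_div_lt_pred_div_add_iff {N k : ℕ} (hk : k < N) {u ε : ℝ}
    (hu : u ∈ Set.Ico 0 1) (hε : 0 ≤ ε) :
    ((k : ℝ) + u) / N < ((N : ℝ) - 1) / N + ε ↔ (k + 1 = N → u < N * ε) := by
  have hN : (0 : ℝ) < N := by exact_mod_cast hk.trans_le' (Nat.zero_le k)
  rw [div_add' _ _ _ hN.ne', div_lt_div_iff_of_pos_right hN]
  rcases Nat.lt_or_ge (k + 1) N with hlt | hge
  · have : (k : ℝ) + 1 + 1 ≤ N := by exact_mod_cast hlt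
    simp only [hlt.ne, false_imp_iff, iff_true]; nlinarith [hu.2]
  · have : (k : ℝ) + 1 = N := by exact_mod_cast le_antisymm hk hge
    simp only [le_antisymm hk hge, forall_const]; constructor <;> intro <;> linarith

lemma mem_anchoredBox_diff_iff {d N : ℕ} (k : Fin d → Fin N) {u : Fin d → ℝ}
    (hu : ∀ j, u j ∈ Set.Ico 0 1) {ε : ℝ} (hε : 0 ≤ ε) :
    (fun j => ((k j : ℕ) + u j) / N) ∈
        anchoredBox (fun _ => ((N : ℝ) - 1) / N + ε) \ anchoredBox (fun _ => ((N : ℝ) - 1) / N)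
      ↔ (∀ j, (k j : ℕ) + 1 = N → u j < N * ε) ∧ ∃ j, (k j : ℕ) + 1 = N := by
  have hnonneg : ∀ j, 0 ≤ ((k j : ℕ) + u j) / (N : ℝ) := fun j => by
    have := (hu j).1; positivity
  simp only [anchoredBox, Set.mem_sdiff, Set.mem_ofPred_eq, Set.mem_Ico, hnonneg, true_and,
    natCast_add_div_lt_pred_div_add_iff (k _).isLt (hu _) hε,
    natCast_add_div_lt_pred_div_iff (k _).isLt (hu _), not_forall]
  refine and_congr_right fun _ => exists_congr fun j => ?_
  have := (k j).isLt
  omega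

lemma forall_mem_anchoredBox_diff_iff_exists_perm {d : ℕ} (p : Fin d → Perm (Fin d))
    {u : Fin d → Fin d → ℝ} (hu : ∀ n j, u n j ∈ Set.Ico 0 1) {ε : ℝ} (hε : 0 ≤ ε)
    (top : Fin d) (htop : (top : ℕ) + 1 = d) :
    (∀ n, (fun j => ((p j n : ℕ) + u n j) / d) ∈
        anchoredBox (fun _ => ((d : ℝ) - 1) / d + ε) \ anchoredBox (fun _ => ((d : ℝ) - 1) / d))
      ↔ ∃ σ : Perm (Fin d), ∀ j, p j (σ j) = top ∧ u (σ j) j < d * ε := by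
  have htop_iff : ∀ k : Fin d, (k : ℕ) + 1 = d ↔ k = top := fun k => by
    rw [Fin.ext_iff]; omega
  simp only [fun n => mem_anchoredBox_diff_iff (fun j => p j n) (hu n) hε, htop_iff]
  exact (exists_perm_forall_apply_eq_iff p top fun n j => u n j < d * ε).symm

namespace IsLHS

variable {Ω : Type*} [MeasurableSpace Ω] {μ : Measure Ω} {d N : ℕ} {X : Fin N → Ω → Fin d → ℝ}
  {π : Fin d → Ω → Perm (Fin N)} {U : Fin N → Ω → Fin d → ℝ}

lemma aemeasurable_perm (h : IsLHS μ d N X π U) (j : Fin d) : AEMeasurable (π j) μ :=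
  AEMeasurable.of_map_ne_zero <| by rw [h.1 j]; exact IsProbabilityMeasure.ne_zero _

lemma aemeasurable_unif (h : IsLHS μ d N X π U) (n : Fin N) (j : Fin d) :
    AEMeasurable (fun ω => U n ω j) μ :=
  AEMeasurable.of_map_ne_zero <| by
    rw [h.2.1 n j, Ne, Measure.restrict_eq_zero, Real.volume_Ico]; norm_num

lemma measure_perm_preimage (h : IsLHS μ d N X π U) (j : Fin d) (s : Set (Perm (Fin N))) :
    μ (π j ⁻¹' s) = (PMF.uniformOfFintype (Perm (Fin N))).toMeasure s := by
  rw [← h.1 j, Measure.map_apply_of_aemeasurable (h.aemeasurable_perm j)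
    MeasurableSpace.measurableSet_top]

lemma measure_unif_preimage (h : IsLHS μ d N X π U) (n : Fin N) (j : Fin d) {s : Set ℝ}
    (hs : MeasurableSet s) :
    μ ((fun ω => U n ω j) ⁻¹' s) = volume (s ∩ Set.Ico 0 1) := by
  rw [← Measure.restrict_apply hs, ← h.2.1 n j,
    Measure.map_apply_of_aemeasurable (h.aemeasurable_unif n j) hs]

lemma ae_unif_mem_Ico (h : IsLHS μ d N X π U) : ∀ᵐ ω ∂μ, ∀ n j, U n ω j ∈ Set.Ico (0 : ℝ) 1 := by
  simp only [ae_all_iff]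
  intro n j
  refine (ae_map_iff (h.aemeasurable_unif n j) measurableSet_Ico).1 ?_
  rw [h.2.1 n j]
  exact ae_restrict_mem measurableSet_Ico

lemma measure_forall_perm_apply_eq_and_unif_mem (h : IsLHS μ d N X π U) (σ : Fin d → Fin N)
    (a : Fin d → Fin N) (s : Fin d → Set ℝ) (hs : ∀ j, MeasurableSet (s j)) :
    μ {ω | ∀ j, π j ω (σ j) = a j ∧ U (σ j) ω j ∈ s j}
      = ∏ j, (N : ℝ≥0∞)⁻¹ * volume (s j ∩ Set.Ico 0 1) := by
  let g : Fin d ⊕ Fin d → Fin d ⊕ (Fin N × Fin d) := Sum.map id fun j => (σ j, j)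
  have hg : g.Injective :=
    Sum.map_injective.2 ⟨Function.injective_id, fun i j hij => (Prod.ext_iff.1 hij).2⟩
  let t : (i : Fin d ⊕ Fin d) → Set (lhsβ d N (g i)) := fun i => match i with
    | .inl j => {p : Perm (Fin N) | p (σ j) = a j}
    | .inr j => (s j : Set ℝ)
  have key := (h.2.2.1.precomp hg).measure_inter_preimage_eq_mul Finset.univ (sets := t) (by
    rintro (j | j) -
    · exact MeasurableSpace.measurableSet_top
    · exact hs j)
  have hevent : {ω | ∀ j, π j ω (σ j) = a j ∧ U (σ j) ω j ∈ s j}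
      = ⋂ i ∈ Finset.univ, lhsFun π U (g i) ⁻¹' t i := by
    ext ω
    simp only [Set.mem_ofPred_eq, Finset.mem_univ, Set.iInter_true, Set.mem_iInter, Sum.forall,
      forall_and]
    rfl
  rw [hevent, key, Fintype.prod_sum_type, ← Finset.prod_mul_distrib]
  refine Finset.prod_congr rfl fun j _ => ?_
  change μ (π j ⁻¹' {p | p (σ j) = a j}) * μ ((fun ω => U (σ j) ω j) ⁻¹' s j) = _
  rw [h.measure_perm_preimage, uniformOfFintype_perm_apply_eq, Fintype.card_fin,
    h.measure_unif_preimage _ _ (hs j)]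

lemma nullMeasurableSet_forall_perm_apply_eq_and_unif_mem (h : IsLHS μ d N X π U)
    (σ : Fin d → Fin N) (a : Fin d → Fin N) (s : Fin d → Set ℝ) (hs : ∀ j, MeasurableSet (s j)) :
    NullMeasurableSet {ω | ∀ j, π j ω (σ j) = a j ∧ U (σ j) ω j ∈ s j} μ := by
  simp only [Set.ofPred_forall, Set.ofPred_and]
  exact .iInter fun j =>
    ((h.aemeasurable_perm j).nullMeasurableSet_preimage (s := {p : Perm (Fin N) | p (σ j) = a j})
      MeasurableSpace.measurableSet_top).inter
      ((h.aemeasurable_unif (σ j) j).nullMeasurableSet_preimage (hs j))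

end IsLHS

theorem stmt2_general {Ω : Type*} [MeasurableSpace Ω] (μ : Measure Ω)
    (d : ℕ)
    (X : Fin d → Ω → Fin d → ℝ) (π : Fin d → Ω → Equiv.Perm (Fin d))
    (U : Fin d → Ω → Fin d → ℝ) (h : IsLHS μ d d X π U)
    (ε : ℝ) (hε : ε ∈ Set.Ioo (0 : ℝ) (1 / (d : ℝ)))
    (D : Set (Fin d → ℝ))
    (hD : D = anchoredBox (fun _ => ((d : ℝ) - 1) / d + ε) \
              anchoredBox (fun _ => ((d : ℝ) - 1) / d)) :
    μ {ω | ∀ n, X n ω ∈ D} = ENNReal.ofReal ((d.factorial : ℝ) * ε ^ d) := by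
  obtain ⟨hε0, hεd⟩ := hε
  have hd : 0 < d := Nat.pos_of_ne_zero fun hd0 => by simp [hd0] at hεd; linarith
  have hdε : (d : ℝ) * ε ≤ 1 := by
    rw [lt_div_iff₀ (by positivity)] at hεd; linarith
  let top : Fin d := ⟨d - 1, Nat.sub_lt hd one_pos⟩
  let A : Perm (Fin d) → Set Ω := fun σ =>
    {ω | ∀ j, π j ω (σ j) = top ∧ U (σ j) ω j ∈ Set.Iio (d * ε)}
  have hevent : {ω | ∀ n, X n ω ∈ D} =ᵐ[μ] ⋃ σ, A σ := by
    refine Filter.eventuallyEq_set.2 ?_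
    filter_upwards [h.ae_unif_mem_Ico] with ω hω
    have hX : ∀ n, X n ω = fun j => ((π j ω n : ℕ) + U n ω j) / d :=
      fun n => funext fun j => h.2.2.2 n j ω
    simp only [Set.mem_ofPred_eq, hX, hD, Set.mem_iUnion, A]
    exact forall_mem_anchoredBox_diff_iff_exists_perm _ hω hε0.le top (Nat.sub_add_cancel hd)
  have hdisj : Pairwise (Function.onFun Disjoint A) := fun σ τ hστ =>
    Set.disjoint_left.2 fun ω hσ hτ => hστ <| Equiv.ext fun j =>
      (π j ω).injective ((hσ j).1.trans (hτ j).1.symm)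
  have hA : ∀ σ, μ (A σ) = ENNReal.ofReal ε ^ d := fun σ => by
    rw [h.measure_forall_perm_apply_eq_and_unif_mem _ _ _ fun _ => measurableSet_Iio,
      Finset.prod_const, Finset.card_univ, Fintype.card_fin, Set.inter_comm, Set.Ico_inter_Iio,
      min_eq_right hdε, Real.volume_Ico, sub_zero, ENNReal.ofReal_mul (by positivity),
      ENNReal.ofReal_natCast, ← mul_assoc, ENNReal.inv_mul_cancel (by simp [hd.ne']) (by simp), one_mul]
  rw [measure_congr hevent, measure_iUnion₀ hdisj.aedisjoint
      fun σ => h.nullMeasurableSet_forall_perm_apply_eq_and_unif_mem _ _ _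
        fun _ => measurableSet_Iio,
    tsum_fintype, Finset.sum_congr rfl fun σ _ => hA σ, Finset.sum_const, Finset.card_univ,
    Fintype.card_perm, Fintype.card_fin, nsmul_eq_mul, ENNReal.ofReal_mul (by positivity),
    ENNReal.ofReal_natCast, ENNReal.ofReal_pow hε0.le]

/-- For a LHS of `N = d` points in `[0,1)^d`, `ε ∈ (0,1/d)` and
`D = [0,(d-1)/d+ε)^d \ [0,(d-1)/d)^d`, one has `P(X_1,…,X_d ∈ D) = d! ε^d`. -/
theorem stmt2 {Ω : Type*} [MeasurableSpace Ω] (μ : Measure Ω) [IsProbabilityMeasure μ]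
    (d : ℕ) (hd : 2 ≤ d)
    (X : Fin d → Ω → Fin d → ℝ) (π : Fin d → Ω → Equiv.Perm (Fin d))
    (U : Fin d → Ω → Fin d → ℝ) (h : IsLHS μ d d X π U)
    (ε : ℝ) (hε : ε ∈ Set.Ioo (0 : ℝ) (1 / (d : ℝ)))
    (D : Set (Fin d → ℝ))
    (hD : D = anchoredBox (fun _ => ((d : ℝ) - 1) / d + ε) \
              anchoredBox (fun _ => ((d : ℝ) - 1) / d)) :
    μ {ω | ∀ n, X n ω ∈ D} = ENNReal.ofReal ((d.factorial : ℝ) * ε ^ d) :=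
  stmt2_general μ d X π U h ε hε D hD

end LHSPaper
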